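/- arXiv:2009.06298 — 5 statements merged into one kernel-verified Lean document; each statement's English description precedes it below -/
import Mathlib

section
/- Let F be a finite field, C_k(α,v,η) a TGRS code of length n and dimension k with 1 ≤ k ≤ n−k, u_i := ∏_{j≠i}(α_i − α_j)^{−1} and a := Σ_{i=1}^n α_i. Suppose a ≠ 0 and η ≠ −a^{−1}. Then the dual code C_k(α,v,η)^⊥ equals the linear code {((u_1/v_1)·g(α_1), …, (u_n/v_n)·g(α_n)) : g(x) = Σ_{i=0}^{n−k−1} b_i x^i − (η/(1+aη))·b_{n−k−1} x^{n−k} with b_0,…,b_{n−k−1} ∈ F}. -/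
open Finset Polynomial

noncomputable section

/-- The twisted generalized Reed–Solomon (TGRS) code of length `n` and dimension `k`,
with evaluation points `α`, multipliers `v`, hook `k-1`, twist `1` and twist
coefficient `η`:  the set of words `(v i * f (α i))_i` where
`f(x) = Σ_{j<k} a_j x^j + η a_{k-1} x^k`. -/
def TGRSCode (F : Type*) [Field F] (n k : ℕ) (α v : Fin n → F) (η : F) :
    Set (Fin n → F) :=
  {c | ∃ a : ℕ → F, c = fun i =>
    v i * ((∑ j ∈ Finset.range k, a j * α i ^ j) + η * a (k - 1) * α i ^ k)}

/-- The dual of a code `C ⊆ F^n` under the standard inner product. -/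
def dualCode {F : Type*} [Field F] {n : ℕ} (C : Set (Fin n → F)) :
    Set (Fin n → F) :=
  {x | ∀ c ∈ C, ∑ i, x i * c i = 0}

/-- A code is self-dual if it coincides with its dual. -/
def IsSelfDual {F : Type*} [Field F] {n : ℕ} (C : Set (Fin n → F)) : Prop :=
  C = dualCode C

/-- The Hamming weight of a word. -/
def hwt {F : Type*} [Field F] {n : ℕ} (c : Fin n → F) : ℕ :=
  {i | c i ≠ 0}.ncard

/-- `C` has minimum (Hamming) distance exactly `d`. -/
def IsMinDist {F : Type*} [Field F] {n : ℕ} (C : Set (Fin n → F)) (d : ℕ) : Prop :=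
  (∃ c ∈ C, c ≠ 0 ∧ hwt c = d) ∧ ∀ c ∈ C, c ≠ 0 → d ≤ hwt c

/-!
With `u i` the Lagrange nodal weights, extracting the top coefficients of a Lagrange interpolant
gives `∑ i, u i * p (α i) = p_{n-1} + a * p_n` whenever `deg p ≤ n`. Pairing a codeword
`v i * f (α i)` with `u i / v i * g (α i)` therefore yields
`f_{k-1} g_{n-k} + f_k g_{n-k-1} + a f_k g_{n-k}`, which vanishes for the two twisted
polynomials since `η + η' (1 + a η) = 0` for `η' = -η / (1 + a η)`.

Conversely, write a dual word as `u i / v i * g (α i)` with `deg g < n` by interpolation.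
Orthogonality to the codewords of `x^j`, `j < k - 1`, kills the top `k - 1` coefficients of `g`,
and orthogonality to the codeword of `x^(k-1) + η x^k` forces `g_{n-k} = η' g_{n-k-1}`.
-/

theorem Polynomial.coeff_mul_of_natDegree_le_add_one {R : Type*} [Semiring R] {f g : R[X]}
    {k m : ℕ} (hf : f.natDegree ≤ k + 1) (hg : g.natDegree ≤ m + 1) :
    (f * g).coeff (k + m + 1) = f.coeff k * g.coeff (m + 1) + f.coeff (k + 1) * g.coeff m := by
  rw [coeff_mul, sum_eq_add_of_mem (k, m + 1) (k + 1, m) (by rw [HasAntidiagonal.mem_antidiagonal]; omega)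
    (by rw [HasAntidiagonal.mem_antidiagonal]; omega) (by simp)]
  rintro ⟨i, j⟩ hij hne
  rw [HasAntidiagonal.mem_antidiagonal] at hij
  dsimp only
  rcases (show k + 1 < i ∨ m + 1 < j by grind) with hi | hj
  · rw [coeff_eq_zero_of_natDegree_lt (hf.trans_lt hi), zero_mul]
  · rw [coeff_eq_zero_of_natDegree_lt (hg.trans_lt hj), mul_zero]

namespace Lagrange

variable {F : Type*} [Field F] {ι : Type*} [DecidableEq ι] {s : Finset ι} {v : ι → F}

theorem sum_nodalWeight_mul_eval_of_degree_lt (hvs : Set.InjOn v s) {p : F[X]}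
    (hp : p.degree < #s) :
    ∑ i ∈ s, nodalWeight s v i * p.eval (v i) = p.coeff (#s - 1) := by
  rw [coeff_eq_sum hvs hp]
  refine sum_congr rfl fun i _ => ?_
  rw [nodalWeight, prod_inv_distrib, div_eq_inv_mul]

theorem sum_nodalWeight_mul_eval_of_degree_le (hvs : Set.InjOn v s) (hs : s.Nonempty)
    {p : F[X]} (hp : p.degree ≤ #s) :
    ∑ i ∈ s, nodalWeight s v i * p.eval (v i)
      = p.coeff (#s - 1) + (∑ i ∈ s, v i) * p.coeff #s := by
  set q := p - C (p.coeff #s) * nodal s v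
  have hq : q.degree < #s := by
    rw [degree_lt_iff_coeff_zero]
    intro m hm
    rcases hm.eq_or_lt with rfl | hlt
    · have : (nodal s v).coeff #s = 1 := by
        simpa [natDegree_nodal] using (nodal_monic (s := s) (v := v)).coeff_natDegree
      simp [q, this]
    · rw [coeff_sub, coeff_C_mul, coeff_eq_zero_of_degree_lt (hp.trans_lt (by exact_mod_cast hlt)),
        coeff_eq_zero_of_natDegree_lt (p := nodal s v) (by rwa [natDegree_nodal]), mul_zero,
        sub_zero]
  calc ∑ i ∈ s, nodalWeight s v i * p.eval (v i)
      = ∑ i ∈ s, nodalWeight s v i * q.eval (v i) :=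
        sum_congr rfl fun i hi => by simp [q, eval_nodal_at_node hi]
    _ = _ := sum_nodalWeight_mul_eval_of_degree_lt hvs hq
    _ = _ := by
        simp only [q, nodal_eq, coeff_sub, coeff_C_mul, prod_X_sub_C_coeff_card_pred s v hs.card_pos]
        ring

theorem degree_lt_of_sum_nodalWeight_mul_eval_X_pow_mul_eq_zero (hvs : Set.InjOn v s)
    {p : F[X]} (hp : p.degree < #s) {d : ℕ} (hd : d ≤ #s)
    (h : ∀ j < d, ∑ i ∈ s, nodalWeight s v i * (X ^ j * p).eval (v i) = 0) :
    p.degree < ↑(#s - d) := by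
  induction d with
  | zero => simpa using hp
  | succ d ih =>
    have hlt := ih (by omega) fun j hj => h j (by omega)
    rw [degree_lt_iff_coeff_zero] at hlt ⊢
    have hXp : (X ^ d * p).degree < ((#s : ℕ) : WithBot ℕ) := by
      rw [degree_lt_iff_coeff_zero]
      intro m hm
      rw [coeff_X_pow_mul']
      split_ifs
      · exact hlt _ (by omega)
      · rfl
    have hcoeff : p.coeff (#s - (d + 1)) = 0 := by
      have := sum_nodalWeight_mul_eval_of_degree_lt hvs hXp
      rwa [h d (by omega), coeff_X_pow_mul', if_pos (by omega),
        show #s - 1 - d = #s - (d + 1) by omega, eq_comm] at this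
    intro m hm
    rcases (show m = #s - (d + 1) ∨ #s - d ≤ m by omega) with rfl | hm'
    · exact hcoeff
    · exact hlt m hm'

theorem sum_nodalWeight_mul_eval_mul (hvs : Set.InjOn v s) {f g : F[X]} {k m : ℕ}
    (hf : f.natDegree ≤ k + 1) (hg : g.natDegree ≤ m + 1) (hs : #s = k + m + 2) :
    ∑ i ∈ s, nodalWeight s v i * (f * g).eval (v i)
      = f.coeff k * g.coeff (m + 1) + f.coeff (k + 1) * g.coeff m
        + (∑ i ∈ s, v i) * (f.coeff (k + 1) * g.coeff (m + 1)) := by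
  have hfg : (f * g).degree ≤ #s := by
    rw [hs, show k + m + 2 = (k + 1) + (m + 1) by ring]
    exact (degree_le_natDegree).trans (by exact_mod_cast natDegree_mul_le_of_le hf hg)
  rw [sum_nodalWeight_mul_eval_of_degree_le hvs (card_pos.mp (by omega)) hfg, hs,
    show k + m + 2 = (k + 1) + (m + 1) by ring, coeff_mul_add_eq_of_natDegree_le hf hg,
    show k + 1 + (m + 1) - 1 = k + m + 1 by omega, coeff_mul_of_natDegree_le_add_one hf hg]

end Lagrange

section TwistedPoly

variable {R : Type*} [Semiring R]

def twistedPoly (η : R) (k : ℕ) (c : ℕ → R) : R[X] :=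
  ∑ j ∈ range k, C (c j) * X ^ j + C (η * c (k - 1)) * X ^ k

variable {η : R} {k : ℕ} {c : ℕ → R}

theorem eval_twistedPoly (x : R) :
    (twistedPoly η k c).eval x = ∑ j ∈ range k, c j * x ^ j + η * c (k - 1) * x ^ k := by
  simp [twistedPoly, eval_finsetSum]

theorem coeff_twistedPoly (t : ℕ) :
    (twistedPoly η k c).coeff t = if t < k then c t else if t = k then η * c (k - 1) else 0 := by
  simp only [twistedPoly, coeff_add, finsetSum_coeff, coeff_C_mul, coeff_X_pow, mul_ite,
    mul_one, mul_zero, sum_ite_eq, mem_range]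
  split_ifs <;> first | omega | simp

theorem natDegree_twistedPoly_le : (twistedPoly η k c).natDegree ≤ k := by
  refine natDegree_le_iff_coeff_eq_zero.mpr fun t ht => ?_
  rw [coeff_twistedPoly, if_neg (by exact_mod_cast ht.not_gt), if_neg (by exact_mod_cast ht.ne')]

theorem twistedPoly_coeff_eq_self {p : R[X]} (hp : p.natDegree ≤ k)
    (htop : p.coeff k = η * p.coeff (k - 1)) : twistedPoly η k p.coeff = p := by
  ext t
  rw [coeff_twistedPoly]
  split_ifs with hlt heq
  · rfl
  · rw [heq, htop]
  · exact (coeff_eq_zero_of_natDegree_lt (by omega)).symm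

theorem twistedPoly_single_of_add_one_lt {j : ℕ} (hj : j + 1 < k) :
    twistedPoly η k (Pi.single j 1) = X ^ j := by
  ext t
  rw [coeff_twistedPoly, coeff_X_pow]
  simp only [Pi.single_apply]
  split_ifs <;> first | omega | simp

end TwistedPoly

open Lagrange

section TGRSDual

variable {F : Type*} [Field F] {n k : ℕ} {α v : Fin n → F} {η : F}

theorem nodalWeight_div_mul_eval_twistedPoly_mem_dualCode (hα : Function.Injective α)
    (hv : ∀ i, v i ≠ 0) (hk : 1 ≤ k) (hkn : k < n) (h1a : 1 + (∑ i, α i) * η ≠ 0)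
    (b : ℕ → F) :
    (fun i => nodalWeight univ α i / v i *
      (twistedPoly (-(η / (1 + (∑ i, α i) * η))) (n - k) b).eval (α i))
      ∈ dualCode (TGRSCode F n k α v η) := by
  rintro _ ⟨c, rfl⟩
  obtain ⟨k, rfl⟩ := Nat.exists_eq_add_of_le' hk
  obtain ⟨m, rfl⟩ : ∃ m, n = k + 1 + (m + 1) := ⟨n - k - 2, by omega⟩
  simp only [Nat.add_sub_cancel, Nat.add_sub_cancel_left]
  calc _ = ∑ i, nodalWeight univ α i * (twistedPoly η (k + 1) c *
          twistedPoly (-(η / (1 + (∑ i, α i) * η))) (m + 1) b).eval (α i) := by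
        refine sum_congr rfl fun i _ => ?_
        simp only [eval_mul, eval_twistedPoly, Nat.add_sub_cancel]
        field_simp [hv i]
    _ = 0 := by
        rw [sum_nodalWeight_mul_eval_mul hα.injOn natDegree_twistedPoly_le natDegree_twistedPoly_le
          (by simp; omega)]
        simp only [coeff_twistedPoly, lt_add_one, lt_irrefl, if_true, if_false,
          Nat.add_sub_cancel]
        rw [div_eq_mul_inv]
        linear_combination (-(c k * η * b m)) * mul_inv_cancel₀ h1a

theorem exists_eq_nodalWeight_div_mul_eval_twistedPoly_of_mem_dualCode
    (hα : Function.Injective α) (hv : ∀ i, v i ≠ 0) (hk : 1 ≤ k) (hkn : k < n)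
    (h1a : 1 + (∑ i, α i) * η ≠ 0) {x : Fin n → F} (hx : x ∈ dualCode (TGRSCode F n k α v η)) :
    ∃ b : ℕ → F, x = fun i => nodalWeight univ α i / v i *
      (twistedPoly (-(η / (1 + (∑ i, α i) * η))) (n - k) b).eval (α i) := by
  obtain ⟨k, rfl⟩ := Nat.exists_eq_add_of_le' hk
  obtain ⟨m, rfl⟩ : ∃ m, n = k + 1 + (m + 1) := ⟨n - k - 2, by omega⟩
  simp only [Nat.add_sub_cancel_left]
  have hw (i) : nodalWeight univ α i ≠ 0 := nodalWeight_ne_zero hα.injOn (mem_univ i)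
  set g := interpolate univ α fun i => x i * v i / nodalWeight univ α i
  have hg (i) : nodalWeight univ α i * g.eval (α i) = x i * v i := by
    rw [eval_interpolate_at_node _ hα.injOn (mem_univ i), mul_div_cancel₀ _ (hw i)]
  have horth (c : ℕ → F) :
      ∑ i, nodalWeight univ α i * (twistedPoly η (k + 1) c * g).eval (α i) = 0 := by
    rw [← hx _ ⟨c, rfl⟩]
    refine sum_congr rfl fun i _ => ?_
    rw [eval_mul, eval_twistedPoly, mul_left_comm, hg]
    ring
  have hdeg : g.natDegree ≤ m + 1 := by
    have := degree_lt_of_sum_nodalWeight_mul_eval_X_pow_mul_eq_zero (s := univ) hα.injOn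
      (degree_interpolate_lt _ hα.injOn) (d := k) (by simp; omega) fun j hj => by
        rw [← twistedPoly_single_of_add_one_lt (η := η) (show j + 1 < k + 1 by omega)]
        exact horth _
    rw [card_univ, Fintype.card_fin, show k + 1 + (m + 1) - k = m + 1 + 1 by omega] at this
    exact natDegree_le_of_degree_le (Order.le_of_lt_succ this)
  have htop : g.coeff (m + 1) = -(η / (1 + (∑ i, α i) * η)) * g.coeff m := by
    have := horth (Pi.single k 1)
    rw [sum_nodalWeight_mul_eval_mul hα.injOn natDegree_twistedPoly_le hdeg (by simp; omega)]
      at this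
    simp only [coeff_twistedPoly, lt_add_one, lt_irrefl, if_true, if_false, Nat.add_sub_cancel,
      Pi.single_eq_same] at this
    rw [neg_mul, div_mul_eq_mul_div, ← neg_div, eq_div_iff h1a]
    linear_combination this
  refine ⟨g.coeff, funext fun i => ?_⟩
  rw [twistedPoly_coeff_eq_self hdeg htop]
  field_simp [hv i]
  linear_combination (hg i).symm

end TGRSDual

theorem tgrs_dual_case_a_ne_zero_general (F : Type*) [Field F] (n k : ℕ)
    (hk : 1 ≤ k) (hkn : k ≤ n - k)
    (α v : Fin n → F) (hα : Function.Injective α) (hv : ∀ i, v i ≠ 0)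
    (η : F)
    (u : Fin n → F) (hu : ∀ i, u i = ∏ j ∈ Finset.univ.erase i, (α i - α j)⁻¹)
    (a : F) (ha : a = ∑ i, α i) (hηa : η ≠ -a⁻¹) :
    dualCode (TGRSCode F n k α v η) =
      {x : Fin n → F | ∃ b : ℕ → F, x = fun i =>
        (u i / v i) * ((∑ j ∈ Finset.range (n - k), b j * α i ^ j)
          - (η / (1 + a * η)) * b (n - k - 1) * α i ^ (n - k))} := by
  obtain rfl : u = nodalWeight univ α := funext hu
  have hkn' : k < n := by omega
  have h1a : 1 + a * η ≠ 0 := fun h => by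
    have ha0 : a ≠ 0 := by rintro rfl; simp at h
    exact hηa (by linear_combination a⁻¹ * h - η * inv_mul_cancel₀ ha0)
  have hform (b : ℕ → F) :
      (fun i => nodalWeight univ α i / v i *
        (twistedPoly (-(η / (1 + a * η))) (n - k) b).eval (α i)) =
      fun i => nodalWeight univ α i / v i * ((∑ j ∈ range (n - k), b j * α i ^ j)
        - (η / (1 + a * η)) * b (n - k - 1) * α i ^ (n - k)) := by
    funext i
    rw [eval_twistedPoly]
    ring
  subst ha
  ext x
  constructor
  · intro hx
    obtain ⟨b, rfl⟩ :=
      exists_eq_nodalWeight_div_mul_eval_twistedPoly_of_mem_dualCode hα hv hk hkn' h1a hx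
    exact ⟨b, hform b⟩
  · rintro ⟨b, rfl⟩
    rw [← hform]
    exact nodalWeight_div_mul_eval_twistedPoly_mem_dualCode hα hv hk hkn' h1a b

/-- for a TGRS code with `a := Σ α_i ≠ 0` and `η ≠ -a⁻¹`, the dual code
is the evaluation code of the twisted polynomials
`g(x) = Σ_{j<n-k} b_j x^j - (η/(1+aη)) b_{n-k-1} x^{n-k}` with multipliers `u_i / v_i`. -/
theorem tgrs_dual_case_a_ne_zero (F : Type*) [Field F] [Fintype F] (n k : ℕ)
    (hk : 1 ≤ k) (hkn : k ≤ n - k)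
    (α v : Fin n → F) (hα : Function.Injective α) (hv : ∀ i, v i ≠ 0)
    (η : F) (hη : η ≠ 0)
    (u : Fin n → F) (hu : ∀ i, u i = ∏ j ∈ Finset.univ.erase i, (α i - α j)⁻¹)
    (a : F) (ha : a = ∑ i, α i) (ha0 : a ≠ 0) (hηa : η ≠ -a⁻¹) :
    dualCode (TGRSCode F n k α v η) =
      {x : Fin n → F | ∃ b : ℕ → F, x = fun i =>
        (u i / v i) * ((∑ j ∈ Finset.range (n - k), b j * α i ^ j)
          - (η / (1 + a * η)) * b (n - k - 1) * α i ^ (n - k))} :=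
  tgrs_dual_case_a_ne_zero_general F n k hk hkn α v hα hv η u hu a ha hηa
end
end

section
/- Let F be a finite field and C_k(α,v,η) a TGRS code of length n and dimension k with 1 ≤ k ≤ n−k. Then C_k(α,v,η) is an MDS code (i.e., its minimum Hamming distance equals n−k+1) if and only if −η^{−1} ∉ S_k, where S_k := { Σ_{i∈I} α_i : I ⊆ {1,…,n}, |I| = k }. -/
open Finset Polynomial

noncomputable section

/-!
Codewords are the evaluation vectors of the twisted polynomials `p`: `deg p ≤ k` and
`p_k = η p_{k-1}`. A nonzero twisted `p` vanishing at `k` distinct points is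
`p_k ∏ (X - α_i)`, and comparing its two top coefficients gives `∑ α_i = -η⁻¹`. So if
`-η⁻¹ ∉ S_k`, every nonzero codeword has at most `k - 1` zeros, i.e. weight `≥ n - k + 1`.
Conversely a multiset of `k` roots summing to `-η⁻¹` is the root multiset of a monic twisted
polynomial: a `k`-subset summing to `-η⁻¹` yields a codeword of weight `≤ n - k`, while
`k - 1` of the points together with the root that completes their sum to `-η⁻¹` yield one of
weight exactly `n - k + 1`.
-/

namespace TGRSCode

variable {F : Type*} [Field F] {n k : ℕ} {η : F}

def IsTwisted (k : ℕ) (η : F) (p : F[X]) : Prop :=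
  p.natDegree ≤ k ∧ p.coeff k = η * p.coeff (k - 1)

theorem mem_iff_exists_isTwisted (hk : k ≠ 0) {α v c : Fin n → F} :
    c ∈ TGRSCode F n k α v η ↔
      ∃ p, IsTwisted k η p ∧ c = fun i => v i * p.eval (α i) := by
  constructor
  · rintro ⟨a, rfl⟩
    refine ⟨∑ j ∈ range k, C (a j) * X ^ j + C (η * a (k - 1)) * X ^ k, ⟨?_, ?_⟩, ?_⟩
    · refine natDegree_add_le_of_degree_le (natDegree_sum_le_of_forall_le _ _ fun j hj => ?_)
        (natDegree_C_mul_X_pow_le _ _)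
      exact (natDegree_C_mul_X_pow_le _ _).trans (mem_range.1 hj).le
    · simp only [coeff_add, finsetSum_coeff, coeff_C_mul_X_pow]
      simp [Nat.sub_lt (Nat.pos_of_ne_zero hk) one_pos, Nat.sub_one_ne_self hk]
    · funext i
      simp [eval_finsetSum]
  · rintro ⟨p, ⟨hdeg, htwist⟩, rfl⟩
    refine ⟨p.coeff, funext fun i => ?_⟩
    rw [eval_eq_sum_range' (Nat.lt_succ_of_le hdeg), sum_range_succ, htwist]

theorem sum_eq_neg_inv_of_isTwisted (hk : k ≠ 0) (hη : η ≠ 0) {p : F[X]}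
    (hp : IsTwisted k η p) (hp0 : p ≠ 0) {s : Finset F} (hs : #s = k)
    (hroots : ∀ x ∈ s, p.eval x = 0) :
    ∑ x ∈ s, x = -η⁻¹ := by
  have hle : s.val ≤ p.roots :=
    (Multiset.le_iff_subset s.nodup).2 fun x hx => (mem_roots hp0).2 (hroots x hx)
  have hdeg : p.natDegree = k :=
    hp.1.antisymm (hs ▸ card_le_degree_of_subset_roots (Multiset.subset_of_le hle))
  have hroots_eq : p.roots = s.val :=
    (Multiset.eq_of_le_of_card_le hle (by simpa [hs, hdeg] using card_roots' p)).symm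
  set c := p.leadingCoeff
  have hfac : C c * ∏ x ∈ s, (X - C x) = p := by
    have h := C_leadingCoeff_mul_prod_multiset_X_sub_C (p := p)
      (by rw [hroots_eq, hdeg, ← hs]; rfl)
    rwa [hroots_eq] at h
  have htop : p.coeff k = c := by rw [← hdeg]; rfl
  have hnext : p.coeff (k - 1) = c * -∑ x ∈ s, x := by
    rw [← hfac, coeff_C_mul, ← hs, prod_X_sub_C_coeff_card_pred s (fun x => x) (by omega)]
  have htwist := hp.2
  rw [htop, hnext] at htwist
  have h : 1 = -(η * ∑ x ∈ s, x) :=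
    mul_left_cancel₀ (leadingCoeff_ne_zero.2 hp0) (by linear_combination htwist)
  field_simp
  linear_combination h

theorem exists_isTwisted_of_sum_eq (hk : k ≠ 0) (hη : η ≠ 0) {m : Multiset F}
    (hm : Multiset.card m = k) (hsum : m.sum = -η⁻¹) :
    ∃ p : F[X], IsTwisted k η p ∧ p ≠ 0 ∧ ∀ x ∈ m, p.eval x = 0 := by
  set p := (m.map fun x => X - C x).prod
  have hmonic : p.Monic := monic_multiset_prod_of_monic _ _ fun x _ => monic_X_sub_C x
  have hdeg : p.natDegree = k := by rw [natDegree_multiset_prod_X_sub_C_eq_card, hm]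
  have htop : p.coeff k = 1 := hdeg ▸ hmonic.coeff_natDegree
  have hnext : p.coeff (k - 1) = η⁻¹ := by
    rw [← hm, multiset_prod_X_sub_C_coeff_card_pred m (by omega), hsum, neg_neg]
  refine ⟨p, ⟨hdeg.le, ?_⟩, hmonic.ne_zero, fun x hx => ?_⟩
  · rw [htop, hnext, mul_inv_cancel₀ hη]
  · rw [← roots_multiset_prod_X_sub_C m, mem_roots hmonic.ne_zero] at hx
    exact hx

theorem ne_zero_of_hwt_pos {c : Fin n → F} (h : 0 < hwt c) : c ≠ 0 := by
  rintro rfl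
  simp [hwt] at h

variable {α v : Fin n → F} {p : F[X]}

section DecidableEq

variable [DecidableEq F]

theorem hwt_mul_of_ne_zero (hv : ∀ i, v i ≠ 0) (g : Fin n → F) :
    hwt (fun i => v i * g i) = n - #{i | g i = 0} := by
  have hsupp : {i | v i * g i ≠ 0} = ↑({i | ¬g i = 0} : Finset (Fin n)) := by
    ext i
    simp [hv i]
  have hsplit := card_filter_add_card_filter_not (s := univ) fun i => g i = 0
  rw [card_univ, Fintype.card_fin] at hsplit
  rw [hwt, hsupp, Set.ncard_coe_finset]
  omega

theorem card_zeros_le_natDegree (hα : Function.Injective α) (hp0 : p ≠ 0) :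
    #{i | p.eval (α i) = 0} ≤ p.natDegree := by
  rw [← card_image_of_injective _ hα]
  refine card_le_degree_of_subset_roots fun x hx => ?_
  obtain ⟨i, hi, rfl⟩ := mem_image.1 (mem_val ▸ hx)
  exact (mem_roots hp0).2 (mem_filter.1 hi).2

theorem card_zeros_lt_of_isTwisted (hk : k ≠ 0) (hα : Function.Injective α) (hη : η ≠ 0)
    (hS : ¬∃ I : Finset (Fin n), #I = k ∧ ∑ i ∈ I, α i = -η⁻¹)
    (hp : IsTwisted k η p) (hp0 : p ≠ 0) :
    #{i | p.eval (α i) = 0} < k := by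
  by_contra! hle
  obtain ⟨I, hIzeros, hI⟩ := exists_subset_card_eq hle
  refine hS ⟨I, hI, ?_⟩
  calc ∑ i ∈ I, α i = ∑ x ∈ I.image α, x := (sum_image (f := fun x => x) hα.injOn).symm
    _ = -η⁻¹ := by
      refine sum_eq_neg_inv_of_isTwisted hk hη hp hp0
        (by rw [card_image_of_injective _ hα, hI]) fun x hx => ?_
      obtain ⟨i, hi, rfl⟩ := mem_image.1 hx
      exact (mem_filter.1 (hIzeros hi)).2

end DecidableEq

theorem sub_natDegree_le_hwt (hv : ∀ i, v i ≠ 0) (hα : Function.Injective α) (hp0 : p ≠ 0) :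
    n - p.natDegree ≤ hwt (fun i => v i * p.eval (α i)) := by
  classical
  rw [hwt_mul_of_ne_zero hv]
  have := card_zeros_le_natDegree hα hp0
  omega

theorem hwt_le_of_eval_eq_zero (hv : ∀ i, v i ≠ 0) {I : Finset (Fin n)}
    (hI : ∀ i ∈ I, p.eval (α i) = 0) :
    hwt (fun i => v i * p.eval (α i)) ≤ n - #I := by
  classical
  rw [hwt_mul_of_ne_zero hv]
  exact Nat.sub_le_sub_left (card_le_card fun i hi => mem_filter.2 ⟨mem_univ i, hI i hi⟩) n

theorem le_hwt_of_isTwisted (hk : k ≠ 0) (hkn : k ≤ n) (hv : ∀ i, v i ≠ 0)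
    (hα : Function.Injective α) (hη : η ≠ 0)
    (hS : ¬∃ I : Finset (Fin n), #I = k ∧ ∑ i ∈ I, α i = -η⁻¹)
    (hp : IsTwisted k η p) (hp0 : p ≠ 0) :
    n - k + 1 ≤ hwt (fun i => v i * p.eval (α i)) := by
  classical
  rw [hwt_mul_of_ne_zero hv]
  have := card_zeros_lt_of_isTwisted hk hα hη hS hp hp0
  omega

end TGRSCode

open TGRSCode

theorem tgrs_mds_iff_general (F : Type*) [Field F] (n k : ℕ)
    (hk : 1 ≤ k) (hkn : k ≤ n - k)
    (α v : Fin n → F) (hα : Function.Injective α) (hv : ∀ i, v i ≠ 0)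
    (η : F) (hη : η ≠ 0) :
    IsMinDist (TGRSCode F n k α v η) (n - k + 1) ↔
      -η⁻¹ ∉ {s : F | ∃ I : Finset (Fin n), I.card = k ∧ ∑ i ∈ I, α i = s} := by
  have hk0 : k ≠ 0 := by omega
  constructor
  · rintro ⟨-, hmin⟩ ⟨I, hI, hsum⟩
    obtain ⟨p, hp, hp0, hroots⟩ := exists_isTwisted_of_sum_eq (m := I.val.map α) hk0 hη
      (by simp [hI]) (by rwa [sum_map_val])
    have hup := hwt_le_of_eval_eq_zero hv (I := I) fun i hi =>
      hroots _ (Multiset.mem_map_of_mem α hi)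
    have hlow := sub_natDegree_le_hwt hv hα hp0
    have hmds := hmin _ ((mem_iff_exists_isTwisted hk0).2 ⟨p, hp, rfl⟩)
      (ne_zero_of_hwt_pos (by have := hp.1; omega))
    omega
  · intro hS
    have hlow : ∀ p, IsTwisted k η p → p ≠ 0 →
        n - k + 1 ≤ hwt (fun i => v i * p.eval (α i)) :=
      fun p hp hp0 => le_hwt_of_isTwisted hk0 (by omega) hv hα hη hS hp hp0
    refine ⟨?_, fun c hc hc0 => ?_⟩
    · obtain ⟨I, -, hI⟩ := exists_subset_card_eq (s := (univ : Finset (Fin n))) (n := k - 1)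
        (by simp only [card_univ, Fintype.card_fin]; omega)
      obtain ⟨p, hp, hp0, hroots⟩ := exists_isTwisted_of_sum_eq
        (m := -(η⁻¹ + ∑ i ∈ I, α i) ::ₘ I.val.map α) hk0 hη (by simp [hI]; omega)
        (by rw [Multiset.sum_cons, sum_map_val]; ring)
      have hup := hwt_le_of_eval_eq_zero hv (I := I) fun i hi =>
        hroots _ (Multiset.mem_cons_of_mem (Multiset.mem_map_of_mem α hi))
      have hge := hlow p hp hp0
      exact ⟨_, (mem_iff_exists_isTwisted hk0).2 ⟨p, hp, rfl⟩, ne_zero_of_hwt_pos (by omega),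
        by omega⟩
    · obtain ⟨p, hp, rfl⟩ := (mem_iff_exists_isTwisted hk0).1 hc
      exact hlow p hp (by rintro rfl; exact hc0 (funext fun i => by simp))

/-- a TGRS code is MDS (minimum distance `n - k + 1`) iff
`-η⁻¹ ∉ S_k = { Σ_{i ∈ I} α_i : |I| = k }`. -/
theorem tgrs_mds_iff (F : Type*) [Field F] [Fintype F] (n k : ℕ)
    (hk : 1 ≤ k) (hkn : k ≤ n - k)
    (α v : Fin n → F) (hα : Function.Injective α) (hv : ∀ i, v i ≠ 0)
    (η : F) (hη : η ≠ 0) :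
    IsMinDist (TGRSCode F n k α v η) (n - k + 1) ↔
      -η⁻¹ ∉ {s : F | ∃ I : Finset (Fin n), I.card = k ∧ ∑ i ∈ I, α i = s} :=
  tgrs_mds_iff_general F n k hk hkn α v hα hv η hη
end
end

section
/- Let F be a finite field and C_k(α,v,η) a TGRS code of length n and dimension k with 2 ≤ k ≤ n−k. Then C_k(α,v,η) is an NMDS code (i.e., both C_k(α,v,η) and its dual code have minimum Hamming distance exactly one less than the Singleton bound: C_k(α,v,η) has minimum distance n−k and its dual has minimum distance k) if and only if −η^{−1} ∈ S_k, where S_k := { Σ_{i∈I} α_i : I ⊆ {1,…,n}, |I| = k }. -/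
open Finset Polynomial

noncomputable section

/-!
A codeword is `(v i * f (α i))_i` with `deg f ≤ k` and `f_k = η f_{k-1}`. For a `k`-set `I` of
nodes with Lagrange weights `u_i = ∏_{j ∈ I, j ≠ i} (α_i - α_j)⁻¹`,
`Σ_{i ∈ I} u_i f(α_i) = f_{k-1} + f_k Σ_I α_i = f_{k-1} (1 + η Σ_I α_i)`.
A codeword of weight `n - k` comes from an `f ≠ 0` vanishing on some `k`-set `I`; then the left
side is `0` while `f_{k-1} ≠ 0`, so `Σ_I α = -η⁻¹`. Conversely, if `Σ_I α = -η⁻¹` then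
`η ∏_{i ∈ I} (x - α_i)` gives a codeword of weight `n - k`, and `(u_i / v_i)_{i ∈ I}` is a dual
codeword of weight `k`. The bounds `n - k` and `k` hold for every TGRS code: a nonzero `f` has at
most `k` roots, and a dual word supported on `J` with `|J| < k` is not orthogonal to the codeword
of `∏_{j ∈ J, j ≠ j₀} (x - α_j)`.
-/

namespace Lagrange

variable {R : Type*} [CommRing R] {ι : Type*} {s : Finset ι} {α : ι → R}

theorem coeff_nodal_card [Nontrivial R] : (nodal s α).coeff #s = 1 := by
  simpa [natDegree_nodal] using (nodal_monic (s := s) (v := α)).coeff_natDegree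

theorem coeff_nodal_card_sub_one (hs : s.Nonempty) :
    (nodal s α).coeff (#s - 1) = -∑ i ∈ s, α i := by
  rw [nodal_eq, prod_X_sub_C_coeff_card_pred _ _ hs.card_pos]

end Lagrange

section TGRS

open Lagrange

variable {F : Type*} [Field F] {ι : Type*}

theorem card_filter_eval_eq_zero_le [Fintype ι] [DecidableEq F] {α : ι → F}
    (hα : Function.Injective α) {p : F[X]} (hp : p ≠ 0) :
    #{i | p.eval (α i) = 0} ≤ p.natDegree := by
  by_contra! h
  exact hp <| eq_zero_of_degree_lt_of_eval_index_eq_zero _ hα.injOn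
    ((natDegree_lt_iff_degree_lt hp).1 h) fun i hi => (mem_filter.1 hi).2

theorem sum_nodalWeight_mul_eval [DecidableEq ι] {s : Finset ι} {α : ι → F}
    (hα : Set.InjOn α s) (hs : s.Nonempty) {p : F[X]} (hp : p.natDegree ≤ #s) :
    ∑ i ∈ s, nodalWeight s α i * p.eval (α i) =
      p.coeff (#s - 1) + p.coeff #s * ∑ i ∈ s, α i := by
  set r := p - C (p.coeff #s) * nodal s α
  have hr : r.degree < #s := by
    refine (degree_lt_iff_coeff_zero _ _).2 fun m hm => ?_
    rcases hm.eq_or_lt with rfl | hm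
    · simp [r, coeff_nodal_card]
    · simp [r, coeff_eq_zero_of_natDegree_lt (hp.trans_lt hm),
        coeff_eq_zero_of_natDegree_lt (natDegree_nodal.trans_lt hm)]
  have hcoeff := coeff_eq_sum hα hr
  simp only [r, coeff_sub, coeff_C_mul, coeff_nodal_card_sub_one hs, eval_sub, eval_mul,
    eval_C, mul_neg, sub_neg_eq_add] at hcoeff
  rw [hcoeff]
  refine sum_congr rfl fun i hi => ?_
  rw [eval_nodal_at_node hi, mul_zero, sub_zero, nodalWeight, prod_inv_distrib, div_eq_inv_mul]

def IsTwisted (k : ℕ) (η : F) (p : F[X]) : Prop :=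
  p.natDegree ≤ k ∧ p.coeff k = η * p.coeff (k - 1)

theorem isTwisted_of_natDegree_lt {k : ℕ} (η : F) {p : F[X]} (hp : p.natDegree < k - 1) :
    IsTwisted k η p := by
  refine ⟨by omega, ?_⟩
  rw [coeff_eq_zero_of_natDegree_lt (by omega), coeff_eq_zero_of_natDegree_lt hp, mul_zero]

theorem isTwisted_C_mul_nodal {s : Finset ι} {α : ι → F} {η : F} (hη : η ≠ 0)
    (hsum : ∑ i ∈ s, α i = -η⁻¹) : IsTwisted #s η (C η * nodal s α) := by
  have hs : s.Nonempty :=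
    nonempty_of_sum_ne_zero (f := α) (by rw [hsum]; exact neg_ne_zero.2 (inv_ne_zero hη))
  refine ⟨natDegree_C_mul_le _ _ |>.trans natDegree_nodal.le, ?_⟩
  rw [coeff_C_mul, coeff_C_mul, coeff_nodal_card, coeff_nodal_card_sub_one hs, hsum, neg_neg,
    mul_inv_cancel₀ hη, mul_one]

namespace IsTwisted

variable [DecidableEq ι] {s : Finset ι} {α : ι → F} {η : F} {p : F[X]}

theorem sum_nodalWeight_mul_eval (hp : IsTwisted #s η p) (hα : Set.InjOn α s)
    (hs : s.Nonempty) :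
    ∑ i ∈ s, nodalWeight s α i * p.eval (α i) = p.coeff (#s - 1) * (1 + η * ∑ i ∈ s, α i) := by
  rw [_root_.sum_nodalWeight_mul_eval hα hs hp.1, hp.2]
  ring

theorem sum_eq_neg_inv (hp : IsTwisted #s η p) (hp0 : p ≠ 0) (hα : Set.InjOn α s)
    (hs : s.Nonempty) (hroot : ∀ i ∈ s, p.eval (α i) = 0) : ∑ i ∈ s, α i = -η⁻¹ := by
  have hsum := hp.sum_nodalWeight_mul_eval hα hs
  rw [sum_eq_zero fun i hi => by rw [hroot i hi, mul_zero], eq_comm, mul_eq_zero] at hsum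
  have hcoeff : p.coeff (#s - 1) ≠ 0 := by
    intro h0
    have hdeg : p.natDegree < #s := hp.1.lt_of_ne fun h =>
      hp0 (leadingCoeff_eq_zero.1 (by rw [leadingCoeff, h, hp.2, h0, mul_zero]))
    exact hp0 (eq_zero_of_degree_lt_of_eval_index_eq_zero s hα
      ((natDegree_lt_iff_degree_lt hp0).1 hdeg) hroot)
  have hmul : η * -∑ i ∈ s, α i = 1 := by
    linear_combination -(hsum.resolve_left hcoeff)
  rw [← eq_inv_of_mul_eq_one_right hmul, neg_neg]

end IsTwisted

section Code

variable {n k : ℕ} {α v : Fin n → F} {η : F}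

theorem mem_TGRSCode_of_isTwisted {p : F[X]} (hp : IsTwisted k η p) :
    (fun i => v i * p.eval (α i)) ∈ TGRSCode F n k α v η := by
  refine ⟨p.coeff, funext fun i => ?_⟩
  rw [eval_eq_sum_range' (Nat.lt_succ_of_le hp.1), sum_range_succ, ← hp.2]

theorem exists_isTwisted_of_mem_TGRSCode (hk : 1 ≤ k) {c : Fin n → F}
    (hc : c ∈ TGRSCode F n k α v η) :
    ∃ p, IsTwisted k η p ∧ c = fun i => v i * p.eval (α i) := by
  obtain ⟨a, rfl⟩ := hc
  refine ⟨∑ j ∈ range k, C (a j) * X ^ j + C (η * a (k - 1)) * X ^ k, ⟨?_, ?_⟩, ?_⟩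
  · refine natDegree_add_le_of_degree_le
      (natDegree_sum_le_of_forall_le _ _ fun j hj => ?_) (natDegree_C_mul_X_pow_le _ _)
    exact (natDegree_C_mul_X_pow_le _ _).trans (mem_range.1 hj).le
  · simp [-map_mul, show k - 1 < k by omega, show k - 1 ≠ k by omega]
  · simp [eval_finsetSum]

theorem hwt_eq_hammingNorm [DecidableEq F] (c : Fin n → F) : hwt c = hammingNorm c := by
  rw [hwt, hammingNorm, ← Set.ncard_coe_finset, coe_filter]
  simp

theorem hwt_pos_iff {c : Fin n → F} : 0 < hwt c ↔ c ≠ 0 := by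
  classical
  rw [hwt_eq_hammingNorm, hammingNorm_pos_iff]

theorem hwt_mul_eval [DecidableEq F] (hv : ∀ i, v i ≠ 0) (p : F[X]) :
    hwt (fun i => v i * p.eval (α i)) = n - #{i | p.eval (α i) = 0} := by
  have hcard := card_filter_add_card_filter_not (s := univ) (fun i => p.eval (α i) = 0)
  rw [card_univ, Fintype.card_fin] at hcard
  rw [hwt_eq_hammingNorm, hammingNorm_comp (fun i x => v i * x)
    (fun i => mul_right_injective₀ (hv i)) (fun i => mul_zero _), hammingNorm]
  simp only [ne_eq]
  omega

theorem le_hwt_of_mem_TGRSCode (hk : 1 ≤ k) (hα : Function.Injective α) (hv : ∀ i, v i ≠ 0)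
    {c : Fin n → F} (hc : c ∈ TGRSCode F n k α v η) (hc0 : c ≠ 0) : n - k ≤ hwt c := by
  classical
  obtain ⟨p, hp, rfl⟩ := exists_isTwisted_of_mem_TGRSCode hk hc
  have hp0 : p ≠ 0 := by rintro rfl; exact hc0 (funext fun i => by simp)
  have hroots := (card_filter_eval_eq_zero_le hα hp0).trans hp.1
  rw [hwt_mul_eval hv]
  omega

theorem exists_sum_eq_neg_inv_of_hwt_eq (hk : 1 ≤ k) (hα : Function.Injective α)
    (hv : ∀ i, v i ≠ 0) {c : Fin n → F} (hc : c ∈ TGRSCode F n k α v η) (hc0 : c ≠ 0)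
    (hw : hwt c = n - k) : ∃ I : Finset (Fin n), #I = k ∧ ∑ i ∈ I, α i = -η⁻¹ := by
  classical
  have hpos := hwt_pos_iff.2 hc0
  obtain ⟨p, hp, rfl⟩ := exists_isTwisted_of_mem_TGRSCode hk hc
  have hp0 : p ≠ 0 := by rintro rfl; exact hc0 (funext fun i => by simp)
  rw [hwt_mul_eval hv] at hw hpos
  have hZ : #{i | p.eval (α i) = 0} = k := by omega
  exact ⟨_, hZ, IsTwisted.sum_eq_neg_inv (hZ ▸ hp) hp0 hα.injOn (card_pos.1 (by omega))
    fun i hi => (mem_filter.1 hi).2⟩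

theorem exists_mem_TGRSCode_hwt_eq {I : Finset (Fin n)} (hI : #I < n)
    (hα : Function.Injective α) (hv : ∀ i, v i ≠ 0) (hη : η ≠ 0)
    (hsum : ∑ i ∈ I, α i = -η⁻¹) :
    ∃ c ∈ TGRSCode F n #I α v η, c ≠ 0 ∧ hwt c = n - #I := by
  classical
  have hZ : ({i | (C η * nodal I α).eval (α i) = 0} : Finset (Fin n)) = I := by
    ext i
    simp [eval_nodal, hη, prod_eq_zero_iff, sub_eq_zero, hα.eq_iff]
  have hw : hwt (fun i => v i * (C η * nodal I α).eval (α i)) = n - #I := by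
    rw [hwt_mul_eval hv, hZ]
  exact ⟨_, mem_TGRSCode_of_isTwisted (isTwisted_C_mul_nodal hη hsum),
    hwt_pos_iff.1 (by omega), hw⟩

theorem le_hwt_of_mem_dualCode (hα : Function.Injective α) (hv : ∀ i, v i ≠ 0)
    {x : Fin n → F} (hx : x ∈ dualCode (TGRSCode F n k α v η)) (hx0 : x ≠ 0) : k ≤ hwt x := by
  classical
  by_contra! hlt
  set J : Finset (Fin n) := {i | x i ≠ 0}
  obtain ⟨j, hj⟩ : J.Nonempty := by simpa [J, Finset.Nonempty] using Function.ne_iff.1 hx0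
  have hJ : #J < k := by rw [hwt_eq_hammingNorm] at hlt; exact hlt
  have hf : IsTwisted k η (nodal (J.erase j) α) :=
    isTwisted_of_natDegree_lt η (by
      rw [natDegree_nodal, card_erase_of_mem hj]; have := card_pos.2 ⟨j, hj⟩; omega)
  have horth := hx _ (mem_TGRSCode_of_isTwisted (v := v) hf)
  rw [← sum_subset (subset_univ J) fun i _ hi => by simp_all [J], ← add_sum_erase _ _ hj,
    sum_eq_zero fun i hi => by rw [eval_nodal_at_node hi, mul_zero, mul_zero], add_zero] at horth
  have hfj : (nodal (J.erase j) α).eval (α j) ≠ 0 :=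
    eval_nodal_not_at_node fun i hi => hα.ne (mem_erase.1 hi).1.symm
  exact mul_ne_zero (mem_filter.1 hj).2 (mul_ne_zero (hv j) hfj) horth

theorem exists_mem_dualCode_hwt_eq {I : Finset (Fin n)} (hα : Function.Injective α)
    (hv : ∀ i, v i ≠ 0) (hη : η ≠ 0) (hsum : ∑ i ∈ I, α i = -η⁻¹) :
    ∃ x ∈ dualCode (TGRSCode F n #I α v η), x ≠ 0 ∧ hwt x = #I := by
  classical
  have hI : I.Nonempty :=
    nonempty_of_sum_ne_zero (f := α) (by rw [hsum]; exact neg_ne_zero.2 (inv_ne_zero hη))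
  set x : Fin n → F := fun i => if i ∈ I then nodalWeight I α i / v i else 0
  have hw : hwt x = #I := by
    rw [hwt_eq_hammingNorm, hammingNorm]
    congr 1
    ext i
    by_cases hi : i ∈ I <;> simp [x, hi, nodalWeight_ne_zero hα.injOn, hv]
  refine ⟨x, fun c hc => ?_, hwt_pos_iff.1 (hw ▸ hI.card_pos), hw⟩
  obtain ⟨p, hp, rfl⟩ := exists_isTwisted_of_mem_TGRSCode hI.card_pos hc
  calc ∑ i, x i * (v i * p.eval (α i))
      = ∑ i ∈ I, nodalWeight I α i * p.eval (α i) := by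
        simp only [x, ite_mul, zero_mul, sum_ite_mem, univ_inter]
        exact sum_congr rfl fun i _ => by field_simp [hv i]
    _ = p.coeff (#I - 1) * (1 + η * ∑ i ∈ I, α i) := hp.sum_nodalWeight_mul_eval hα.injOn hI
    _ = 0 := by rw [hsum, mul_neg, mul_inv_cancel₀ hη, add_neg_cancel, mul_zero]

end Code

end TGRS

theorem tgrs_nmds_iff_general (F : Type*) [Field F] (n k : ℕ)
    (hk : 2 ≤ k) (hkn : k ≤ n - k)
    (α v : Fin n → F) (hα : Function.Injective α) (hv : ∀ i, v i ≠ 0)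
    (η : F) (hη : η ≠ 0) :
    (IsMinDist (TGRSCode F n k α v η) (n - k) ∧
      IsMinDist (dualCode (TGRSCode F n k α v η)) k) ↔
      -η⁻¹ ∈ {s : F | ∃ I : Finset (Fin n), I.card = k ∧ ∑ i ∈ I, α i = s} := by
  constructor
  · rintro ⟨⟨⟨c, hc, hc0, hw⟩, -⟩, -⟩
    exact exists_sum_eq_neg_inv_of_hwt_eq (by omega) hα hv hc hc0 hw
  · rintro ⟨I, rfl, hsum⟩
    exact ⟨⟨exists_mem_TGRSCode_hwt_eq (by omega) hα hv hη hsum,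
        fun c hc hc0 => le_hwt_of_mem_TGRSCode (by omega) hα hv hc hc0⟩,
      ⟨exists_mem_dualCode_hwt_eq hα hv hη hsum,
        fun x hx hx0 => le_hwt_of_mem_dualCode hα hv hx hx0⟩⟩

/-- a TGRS code is NMDS (the code has minimum distance `n - k` and its
dual has minimum distance `k`) iff `-η⁻¹ ∈ S_k = { Σ_{i ∈ I} α_i : |I| = k }`. -/
theorem tgrs_nmds_iff (F : Type*) [Field F] [Fintype F] (n k : ℕ)
    (hk : 2 ≤ k) (hkn : k ≤ n - k)
    (α v : Fin n → F) (hα : Function.Injective α) (hv : ∀ i, v i ≠ 0)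
    (η : F) (hη : η ≠ 0) :
    (IsMinDist (TGRSCode F n k α v η) (n - k) ∧
      IsMinDist (dualCode (TGRSCode F n k α v η)) k) ↔
      -η⁻¹ ∈ {s : F | ∃ I : Finset (Fin n), I.card = k ∧ ∑ i ∈ I, α i = s} :=
  tgrs_nmds_iff_general F n k hk hkn α v hα hv η hη
end
end

section
/- Let F be a finite field of odd characteristic, n = 2k with k ≥ 3, and C_k(α,v,η) a TGRS code of length n and dimension k. Suppose a := Σ_{i=1}^n α_i = 0 and η ≠ 0. Then C_k(α,v,η) is not a self-dual code. -/
/-!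
Write `S m = Σ v_i² α_i^m`. Pairing the codewords of the messages `x^j`, `j < k`, with each
other, self-duality forces `S m = 0` for `m ≤ 2k - 4`, and then, through the twisted codeword
of `x^(k-1)`, also for `m = 2k - 3, 2k - 2`. Since `Σ α_i = 0`, the polynomial `∏ (X - α_i)` has
no `X^(n-1)` term, so `Σ v_i² ∏_j (α_i - α_j) = 0` gives `S n = 0`; pairing the twisted codeword
with itself then leaves `2η S (n-1) = 0`. Hence `S m = 0` for all `m < n`, and invertibility of
the Vandermonde matrix of the distinct `α_i` forces `v_i² = 0`.
-/

open Finset Polynomial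

noncomputable section

section WeightedPowerSum

variable {ι R : Type*} [Fintype ι] [CommRing R]

def weightedPowerSum (u α : ι → R) (m : ℕ) : R :=
  ∑ i, u i * α i ^ m

lemma sum_coeff_mul_weightedPowerSum_eq_zero (u α : ι → R) {p : R[X]}
    (hp : ∀ i, p.IsRoot (α i)) :
    ∑ m ∈ range (p.natDegree + 1), p.coeff m * weightedPowerSum u α m = 0 := by
  have h : ∑ i, u i * p.eval (α i) = 0 :=
    sum_eq_zero fun i _ => by rw [(hp i).eq_zero, mul_zero]
  simp only [eval_eq_sum_range, mul_sum] at h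
  rw [sum_comm] at h
  simpa only [weightedPowerSum, mul_sum, mul_left_comm] using h

/-- Take `p = ∏ (X - α_i)`: it is monic of degree `n` and its coefficient of `X^(n-1)` is
`-Σ α_i = 0`. -/
lemma weightedPowerSum_card_eq_zero [Nontrivial R] {u α : ι → R} (hα : ∑ i, α i = 0)
    (hS : ∀ m, m + 2 ≤ Fintype.card ι → weightedPowerSum u α m = 0) :
    weightedPowerSum u α (Fintype.card ι) = 0 := by
  rcases (Fintype.card ι).eq_zero_or_pos with hι | hι
  · simp [weightedPowerSum, Fintype.card_eq_zero_iff.mp hι]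
  set P : R[X] := ∏ i, (X - C (α i))
  have hdeg : P.natDegree = Fintype.card ι := by simp [P]
  have hlead : P.coeff (Fintype.card ι) = 1 := by
    simpa [hdeg] using (monic_prod_X_sub_C α univ).coeff_natDegree
  have hsub : P.coeff (Fintype.card ι - 1) = 0 := by
    simpa [hα] using prod_X_sub_C_coeff_card_pred univ α (by simpa using hι)
  have h := sum_coeff_mul_weightedPowerSum_eq_zero u α (p := P) fun i =>
    by simp [P, IsRoot, eval_prod, prod_eq_zero (mem_univ i)]
  rw [hdeg, sum_range_succ, hlead, one_mul] at h
  rwa [sum_eq_zero fun m hm => ?_, zero_add] at h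
  rcases (show m + 2 ≤ Fintype.card ι ∨ m = Fintype.card ι - 1 by
    have := mem_range.mp hm; omega) with hm | rfl
  · rw [hS m hm, mul_zero]
  · rw [hsub, zero_mul]

end WeightedPowerSum

namespace TGRSCode

variable {F : Type*} [Field F] {n : ℕ} (k : ℕ) (α v : Fin n → F) (η : F)

/-- The codeword of the message `x^j`, which is twisted only for the hook `j = k - 1`. -/
def basisWord (j : ℕ) : Fin n → F :=
  fun i => v i * (α i ^ j + (if j = k - 1 then η else 0) * α i ^ k)

lemma basisWord_mem {j : ℕ} (hj : j < k) :
    basisWord k α v η j ∈ TGRSCode F n k α v η := by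
  refine ⟨fun m => if m = j then 1 else 0, funext fun i => ?_⟩
  simp [basisWord, hj, eq_comm]

lemma sum_basisWord_mul_basisWord (j l : ℕ) :
    ∑ i, basisWord k α v η j i * basisWord k α v η l i =
      weightedPowerSum (v * v) α (j + l)
        + (if j = k - 1 then η else 0) * weightedPowerSum (v * v) α (k + l)
        + (if l = k - 1 then η else 0) * weightedPowerSum (v * v) α (j + k)
        + (if j = k - 1 then η else 0) * (if l = k - 1 then η else 0)
          * weightedPowerSum (v * v) α (k + k) := by
  simp only [basisWord, weightedPowerSum, mul_sum, ← sum_add_distrib, pow_add, Pi.mul_apply]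
  exact sum_congr rfl fun i _ => by ring

variable {k α v η} (hC : TGRSCode F n k α v η ⊆ dualCode (TGRSCode F n k α v η))
include hC

lemma weightedPowerSum_relation_of_subset_dual {j l : ℕ} (hj : j < k) (hl : l < k) :
    weightedPowerSum (v * v) α (j + l)
        + (if j = k - 1 then η else 0) * weightedPowerSum (v * v) α (k + l)
        + (if l = k - 1 then η else 0) * weightedPowerSum (v * v) α (j + k)
        + (if j = k - 1 then η else 0) * (if l = k - 1 then η else 0)
          * weightedPowerSum (v * v) α (k + k) = 0 := by
  rw [← sum_basisWord_mul_basisWord]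
  simpa only [mul_comm] using hC (basisWord_mem k α v η hj) _ (basisWord_mem k α v η hl)

lemma weightedPowerSum_eq_zero_of_add_four_le {m : ℕ} (hm : m + 4 ≤ 2 * k) :
    weightedPowerSum (v * v) α m = 0 := by
  have h := weightedPowerSum_relation_of_subset_dual hC
    (j := min m (k - 2)) (l := m - min m (k - 2)) (by omega) (by omega)
  rw [if_neg (by omega), if_neg (by omega), Nat.add_sub_cancel' (min_le_left _ _)] at h
  simpa only [zero_mul, add_zero] using h

lemma weightedPowerSum_hook_relation {j : ℕ} (hj : j + 2 ≤ k) :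
    weightedPowerSum (v * v) α (j + (k - 1)) + η * weightedPowerSum (v * v) α (j + k) = 0 := by
  simpa [show j ≠ k - 1 by omega] using
    weightedPowerSum_relation_of_subset_dual hC (j := j) (l := k - 1) (by omega) (by omega)

lemma weightedPowerSum_hook_hook_relation (hk : 0 < k) :
    weightedPowerSum (v * v) α (2 * k - 2) + 2 * η * weightedPowerSum (v * v) α (2 * k - 1)
      + η ^ 2 * weightedPowerSum (v * v) α (2 * k) = 0 := by
  have h := weightedPowerSum_relation_of_subset_dual hC (j := k - 1) (l := k - 1)
    (by omega) (by omega)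
  rw [if_pos rfl, show k - 1 + (k - 1) = 2 * k - 2 by omega, show k + (k - 1) = 2 * k - 1 by omega,
    show k - 1 + k = 2 * k - 1 by omega, ← two_mul] at h
  linear_combination h

lemma weightedPowerSum_eq_zero_of_lt (hk : 3 ≤ k) (hn : n = 2 * k) (hα : ∑ i, α i = 0)
    (hη : η ≠ 0) (h2 : (2 : F) ≠ 0) {m : ℕ} (hm : m < n) :
    weightedPowerSum (v * v) α m = 0 := by
  subst hn
  have hSn3 : weightedPowerSum (v * v) α (2 * k - 3) = 0 := by
    have h := weightedPowerSum_hook_relation hC (j := k - 3) (by omega)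
    rw [show k - 3 + (k - 1) = 2 * k - 4 by omega, show k - 3 + k = 2 * k - 3 by omega,
      weightedPowerSum_eq_zero_of_add_four_le hC (by omega), zero_add] at h
    exact (mul_eq_zero.mp h).resolve_left hη
  have hSn2 : weightedPowerSum (v * v) α (2 * k - 2) = 0 := by
    have h := weightedPowerSum_hook_relation hC (j := k - 2) (by omega)
    rw [show k - 2 + (k - 1) = 2 * k - 3 by omega, show k - 2 + k = 2 * k - 2 by omega,
      hSn3, zero_add] at h
    exact (mul_eq_zero.mp h).resolve_left hη
  have hS_le : ∀ m, m + 2 ≤ 2 * k → weightedPowerSum (v * v) α m = 0 := fun m hm => by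
    rcases (show m + 4 ≤ 2 * k ∨ m = 2 * k - 3 ∨ m = 2 * k - 2 by omega) with hm | rfl | rfl
    exacts [weightedPowerSum_eq_zero_of_add_four_le hC hm, hSn3, hSn2]
  have hSn : weightedPowerSum (v * v) α (2 * k) = 0 := by
    simpa using weightedPowerSum_card_eq_zero hα (by simpa using hS_le)
  have hSn1 : weightedPowerSum (v * v) α (2 * k - 1) = 0 := by
    have h := weightedPowerSum_hook_hook_relation hC (by omega)
    rw [hSn2, hSn, mul_zero, zero_add, add_zero] at h
    exact (mul_eq_zero.mp h).resolve_left (mul_ne_zero h2 hη)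
  rcases (show m + 2 ≤ 2 * k ∨ m = 2 * k - 1 by omega) with hm | rfl
  exacts [hS_le m hm, hSn1]

end TGRSCode

theorem tgrs_not_selfdual_a_eq_zero_general (F : Type*) [Field F]
    (hchar : ringChar F ≠ 2) (n k : ℕ) (hk : 3 ≤ k) (hn : n = 2 * k)
    (α v : Fin n → F) (hα : Function.Injective α) (hv : ∀ i, v i ≠ 0)
    (η : F) (hη : η ≠ 0)
    (ha : ∑ i, α i = 0) :
    ¬ IsSelfDual (TGRSCode F n k α v η) := by
  intro hsd
  have hS : ∀ i : Fin n, weightedPowerSum (v * v) α i = 0 := fun i =>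
    TGRSCode.weightedPowerSum_eq_zero_of_lt hsd.subset hk hn ha hη (Ring.two_ne_zero hchar) i.isLt
  have hvv : v * v = 0 := Matrix.eq_zero_of_forall_pow_sum_mul_pow_eq_zero hα hS
  exact hv ⟨0, by omega⟩ (mul_self_eq_zero.mp (congrFun hvv _))

/-- for `n = 2k`, `k ≥ 3`, if `a := Σ α_i = 0` and `η ≠ 0`, then the
TGRS code is not self-dual. -/
theorem tgrs_not_selfdual_a_eq_zero (F : Type*) [Field F] [Fintype F]
    (hchar : ringChar F ≠ 2) (n k : ℕ) (hk : 3 ≤ k) (hn : n = 2 * k)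
    (α v : Fin n → F) (hα : Function.Injective α) (hv : ∀ i, v i ≠ 0)
    (η : F) (hη : η ≠ 0)
    (ha : ∑ i, α i = 0) :
    ¬ IsSelfDual (TGRSCode F n k α v η) :=
  tgrs_not_selfdual_a_eq_zero_general F hchar n k hk hn α v hα hv η hη ha
end
end

section
/- Let F be a finite field of odd characteristic, n = 2k with k ≥ 3, and C_k(α,v,η) a TGRS code of length n and dimension k. Suppose a := Σ_{i=1}^n α_i ≠ 0 and η = −a^{−1}. Then C_k(α,v,η) is not a self-dual code. -/
/-!
Write `S j = ∑ i, v i ^ 2 * α i ^ j`. Self-duality makes the codewords `v · x ^ m` (`m < k - 1`)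
and `v · (x ^ (k - 1) + η x ^ k)` pairwise orthogonal, which forces `S j = 0` for `j ≤ 2k - 2`
(for `j = 2k - 3, 2k - 2` through `S (m + k - 1) + η S (m + k) = 0`). As every `α i` is a root of `∏ j, (x - α j)`,
this gives `S (2k) = a S (2k - 1)`, so the self-pairing of the twisted codeword reads
`2 η S (2k - 1) + η² a S (2k - 1) = η S (2k - 1) = 0`. Hence `S j = 0` for all `j < n`, and
the invertibility of the Vandermonde matrix gives `v i ^ 2 = 0`.
-/

open Finset Polynomial

noncomputable section

section PowerSums

variable {R ι : Type*} [CommRing R] [Fintype ι]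

-- Each `α i` is a root of `∏ j, (X - C (α j)) = X ^ n - (∑ j, α j) X ^ (n - 1) + ⋯`.
theorem sum_mul_pow_card_eq_sum_mul_sum_mul_pow_pred (w α : ι → R)
    (h : ∀ j < Fintype.card ι - 1, ∑ i, w i * α i ^ j = 0) :
    ∑ i, w i * α i ^ Fintype.card ι = (∑ i, α i) * ∑ i, w i * α i ^ (Fintype.card ι - 1) := by
  nontriviality R
  set n := Fintype.card ι with hn_def
  rcases Nat.eq_zero_or_pos n with hn | hn
  · have : IsEmpty ι := Fintype.card_eq_zero_iff.mp hn
    simp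
  set q : R[X] := X ^ n - ∏ i, (X - C (α i))
  have hq : q.natDegree < n :=
    (isMonicOfDegree_X_pow R n).natDegree_sub_lt hn.ne'
      ⟨by simp [n], monic_prod_of_monic _ _ fun i _ => monic_X_sub_C _⟩
  have hq_eval (i : ι) : q.eval (α i) = α i ^ n := by
    simp [q, eval_prod, prod_eq_zero (mem_univ i)]
  have hq_coeff : q.coeff (n - 1) = ∑ i, α i := by
    have h_vieta := prod_X_sub_C_coeff_card_pred univ α hn
    rw [card_univ, ← hn_def] at h_vieta
    rw [coeff_sub, coeff_X_pow, if_neg (by omega), h_vieta, zero_sub, neg_neg]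
  calc ∑ i, w i * α i ^ n = ∑ i, w i * q.eval (α i) := by simp_rw [hq_eval]
    _ = ∑ j ∈ range n, q.coeff j * ∑ i, w i * α i ^ j := by
        simp_rw [eval_eq_sum_range' hq, mul_sum]
        rw [sum_comm]
        exact sum_congr rfl fun j _ => sum_congr rfl fun i _ => by ring
    _ = q.coeff (n - 1) * ∑ i, w i * α i ^ (n - 1) :=
        sum_eq_single_of_mem _ (mem_range.mpr (by omega)) fun j hj hne => by
          rw [h j (by rw [mem_range] at hj; omega), mul_zero]
    _ = _ := by rw [hq_coeff]

end PowerSums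

theorem IsSelfDual.sum_mul_eq_zero {F : Type*} [Field F] {n : ℕ} {C : Set (Fin n → F)}
    (hC : IsSelfDual C) {c c' : Fin n → F} (hc : c ∈ C) (hc' : c' ∈ C) :
    ∑ i, c i * c' i = 0 :=
  hC.subset hc c' hc'

namespace TGRSCode

variable {F : Type*} [Field F] {n k : ℕ} {α v : Fin n → F} {η : F}

theorem monomial_mem {m : ℕ} (hm : m < k - 1) :
    (fun i => v i * α i ^ m) ∈ TGRSCode F n k α v η := by
  refine ⟨fun j => if j = m then 1 else 0, funext fun i => ?_⟩
  simp [mem_range.mpr (by omega : m < k), hm.ne']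

theorem twisted_mem (hk : 0 < k) :
    (fun i => v i * (α i ^ (k - 1) + η * α i ^ k)) ∈ TGRSCode F n k α v η := by
  refine ⟨fun j => if j = k - 1 then 1 else 0, funext fun i => ?_⟩
  simp [mem_range.mpr (by omega : k - 1 < k)]

theorem orthogonal_monomial_monomial (hC : IsSelfDual (TGRSCode F n k α v η)) {m m' : ℕ}
    (hm : m < k - 1) (hm' : m' < k - 1) : ∑ i, v i ^ 2 * α i ^ (m + m') = 0 := by
  rw [← hC.sum_mul_eq_zero (monomial_mem hm) (monomial_mem hm')]
  exact sum_congr rfl fun i _ => by ring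

theorem orthogonal_monomial_twisted (hC : IsSelfDual (TGRSCode F n k α v η))
    {m : ℕ} (hm : m < k - 1) :
    ∑ i, v i ^ 2 * α i ^ (m + (k - 1)) + η * ∑ i, v i ^ 2 * α i ^ (m + k) = 0 := by
  rw [← hC.sum_mul_eq_zero (monomial_mem hm) (twisted_mem (by omega)), mul_sum,
    ← sum_add_distrib]
  exact sum_congr rfl fun i _ => by ring

theorem orthogonal_twisted_twisted (hC : IsSelfDual (TGRSCode F n k α v η))
    (hk : 0 < k) :
    ∑ i, v i ^ 2 * α i ^ (2 * k - 2) + 2 * η * ∑ i, v i ^ 2 * α i ^ (2 * k - 1)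
      + η ^ 2 * ∑ i, v i ^ 2 * α i ^ (2 * k) = 0 := by
  rw [← hC.sum_mul_eq_zero (twisted_mem hk) (twisted_mem hk), mul_sum, mul_sum,
    ← sum_add_distrib, ← sum_add_distrib, show 2 * k - 2 = (k - 1) + (k - 1) by omega,
    show 2 * k - 1 = (k - 1) + k by omega, two_mul]
  exact sum_congr rfl fun i _ => by ring

theorem sum_sq_mul_pow_eq_zero_of_lt (hC : IsSelfDual (TGRSCode F n k α v η)) (hk : 3 ≤ k)
    (hη : η ≠ 0) {j : ℕ} (hj : j < 2 * k - 1) : ∑ i, v i ^ 2 * α i ^ j = 0 := by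
  have h_low (j : ℕ) (hj : j ≤ 2 * k - 4) : ∑ i, v i ^ 2 * α i ^ j = 0 := by
    obtain ⟨m, m', rfl, hm, hm'⟩ : ∃ m m', m + m' = j ∧ m < k - 1 ∧ m' < k - 1 :=
      ⟨min j (k - 2), j - min j (k - 2), by omega, by omega, by omega⟩
    exact orthogonal_monomial_monomial hC hm hm'
  have h_step (m : ℕ) (hm : m < k - 1) (h : ∑ i, v i ^ 2 * α i ^ (m + (k - 1)) = 0) :
      ∑ i, v i ^ 2 * α i ^ (m + k) = 0 := by
    have := orthogonal_monomial_twisted hC hm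
    rw [h, zero_add] at this
    exact (mul_eq_zero.mp this).resolve_left hη
  have h_pred : ∑ i, v i ^ 2 * α i ^ (2 * k - 3) = 0 := by
    have := h_step (k - 3) (by omega)
      (by rw [show k - 3 + (k - 1) = 2 * k - 4 by omega]; exact h_low _ le_rfl)
    rwa [show k - 3 + k = 2 * k - 3 by omega] at this
  rcases (by omega : j ≤ 2 * k - 4 ∨ j = 2 * k - 3 ∨ j = 2 * k - 2) with hj | rfl | rfl
  · exact h_low j hj
  · exact h_pred
  · have := h_step (k - 2) (by omega) (by rwa [show k - 2 + (k - 1) = 2 * k - 3 by omega])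
    rwa [show k - 2 + k = 2 * k - 2 by omega] at this

end TGRSCode

theorem tgrs_not_selfdual_eta_eq_neg_inv_general (F : Type*) [Field F]
    (n k : ℕ) (hk : 3 ≤ k) (hn : n = 2 * k)
    (α v : Fin n → F) (hα : Function.Injective α) (hv : ∀ i, v i ≠ 0)
    (η : F)
    (a : F) (ha : a = ∑ i, α i) (ha0 : a ≠ 0) (hηa : η = -a⁻¹) :
    ¬ IsSelfDual (TGRSCode F n k α v η) := by
  intro hC
  subst hn
  have hη : η ≠ 0 := by simpa [hηa] using ha0
  have hηa' : η * a = -1 := by rw [hηa]; field_simp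
  have h_low (j : ℕ) (hj : j < 2 * k - 1) : ∑ i, v i ^ 2 * α i ^ j = 0 :=
    TGRSCode.sum_sq_mul_pow_eq_zero_of_lt hC hk hη hj
  have h_top : ∑ i, v i ^ 2 * α i ^ (2 * k) = a * ∑ i, v i ^ 2 * α i ^ (2 * k - 1) := by
    simpa [ha] using sum_mul_pow_card_eq_sum_mul_sum_mul_pow_pred (fun i => v i ^ 2) α
      (by simpa using h_low)
  have h_pred : ∑ i, v i ^ 2 * α i ^ (2 * k - 1) = 0 := by
    have := TGRSCode.orthogonal_twisted_twisted hC (by omega)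
    rw [h_low _ (by omega), h_top] at this
    refine (mul_eq_zero.mp (?_ : η * _ = 0)).resolve_left hη
    linear_combination this - η * (∑ i, v i ^ 2 * α i ^ (2 * k - 1)) * hηa'
  have h_sq : (fun i => v i ^ 2) = 0 :=
    Matrix.eq_zero_of_forall_pow_sum_mul_pow_eq_zero hα fun j =>
      if hj : (j : ℕ) = 2 * k - 1 then hj ▸ h_pred else h_low j (by omega)
  exact hv ⟨0, by omega⟩ (pow_eq_zero_iff two_ne_zero |>.mp (congrFun h_sq _))

/-- for `n = 2k`, `k ≥ 3`, if `a := Σ α_i ≠ 0` and `η = -a⁻¹`, then the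
TGRS code is not self-dual. -/
theorem tgrs_not_selfdual_eta_eq_neg_inv (F : Type*) [Field F] [Fintype F]
    (hchar : ringChar F ≠ 2) (n k : ℕ) (hk : 3 ≤ k) (hn : n = 2 * k)
    (α v : Fin n → F) (hα : Function.Injective α) (hv : ∀ i, v i ≠ 0)
    (η : F)
    (a : F) (ha : a = ∑ i, α i) (ha0 : a ≠ 0) (hηa : η = -a⁻¹) :
    ¬ IsSelfDual (TGRSCode F n k α v η) :=
  tgrs_not_selfdual_eta_eq_neg_inv_general F n k hk hn α v hα hv η a ha ha0 hηa
end
end
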